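/- For n ≥ 6 and any i ∈ {3,...,n}, the inequality (v_2 − v_1)x_2 + (v_3 − v_1)x_i ≥ v_2 v_3 − v_1² is valid for all circuits on values v_1 < ... < v_n. -/
import Mathlib


/-- A circuit on `{1,...,n}`: a permutation of `Fin n` that is a single `n`-cycle. -/
def IsCircuitPerm {n : ℕ} (σ : Equiv.Perm (Fin n)) : Prop :=
  σ.IsCycle ∧ σ.support = Finset.univ

/-- A circuit point on values `v`: `x i = v (σ i)` for some single-`n`-cycle permutation `σ`. -/
def IsCircuitPt {n : ℕ} (v : Fin n → ℝ) (x : Fin n → ℝ) : Prop :=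
  ∃ σ : Equiv.Perm (Fin n), IsCircuitPerm σ ∧ ∀ i, x i = v (σ i)

/-- For `n ≥ 6` and `i ∈ {3,…,n}`, the inequality
`(v_2 − v_1)x_2 + (v_3 − v_1)x_i ≥ v_2 v_3 − v_1²` is valid for all circuits. -/
theorem stmt_12 (n : ℕ) (hn : 6 ≤ n) (v : Fin n → ℝ)
    (hv0 : 0 ≤ v ⟨0, by omega⟩) (hv : StrictMono v)
    (i : Fin n) (hi : 2 ≤ (i : ℕ)) :
    ∀ x : Fin n → ℝ, IsCircuitPt v x →
      v ⟨1, by omega⟩ * v ⟨2, by omega⟩ - v ⟨0, by omega⟩ ^ 2 ≤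
        (v ⟨1, by omega⟩ - v ⟨0, by omega⟩) * x ⟨1, by omega⟩ +
        (v ⟨2, by omega⟩ - v ⟨0, by omega⟩) * x i := by
  rintro x ⟨σ, ⟨hcyc, hsupp⟩, hx⟩
  set a := v ⟨0, by omega⟩ with ha
  set b := v ⟨1, by omega⟩ with hb
  set c := v ⟨2, by omega⟩ with hc
  have hab : a ≤ b := le_of_lt (hv (by simp [Fin.lt_def]))
  have hbc : b ≤ c := le_of_lt (hv (by simp [Fin.lt_def]))
  have hmono : ∀ (k : ℕ) (hk : k < n) (j : Fin n), k ≤ (j : ℕ) → v ⟨k, hk⟩ ≤ v j := by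
    intro k hk j hj
    exact hv.monotone (by simpa [Fin.le_def] using hj)
  have hσ1 : σ ⟨1, by omega⟩ ≠ ⟨1, by omega⟩ := by
    have : (⟨1, by omega⟩ : Fin n) ∈ σ.support := hsupp ▸ Finset.mem_univ _
    exact Equiv.Perm.mem_support.mp this
  by_cases h0 : σ ⟨1, by omega⟩ = ⟨0, by omega⟩
  · -- x₁ = a, and σ i ≠ 0 so x_i ≥ b
    have hi1 : i ≠ ⟨1, by omega⟩ := by
      intro h; rw [h] at hi; simp at hi
    have hσi : σ i ≠ ⟨0, by omega⟩ := by
      intro h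
      exact hi1 (σ.injective (h.trans h0.symm))
    have hσi1 : 1 ≤ (σ i : ℕ) := by
      rcases Nat.eq_zero_or_pos (σ i : ℕ) with h | h
      · exact absurd (Fin.ext h) hσi
      · exact h
    have hxi : b ≤ x i := by
      rw [hx i]; exact hmono 1 (by omega) (σ i) hσi1
    have hx1 : x ⟨1, by omega⟩ = a := by rw [hx, h0]
    nlinarith
  · -- σ 1 ∉ {0,1}, so x₁ ≥ c; x_i ≥ a
    have hσ2 : 2 ≤ (σ ⟨1, by omega⟩ : ℕ) := by
      rcases Nat.lt_or_ge (σ ⟨1, by omega⟩ : ℕ) 2 with h | h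
      · interval_cases hk : (σ ⟨1, by omega⟩ : ℕ)
        · exact absurd (Fin.ext hk) h0
        · exact absurd (Fin.ext hk) hσ1
      · exact h
    have hx1 : c ≤ x ⟨1, by omega⟩ := by
      rw [hx]; exact hmono 2 (by omega) _ hσ2
    have hxi : a ≤ x i := by
      rw [hx]; exact hmono 0 (by omega) _ (Nat.zero_le _)
    nlinarith
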